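/- If both G and H are complete fuzzy graphs, then the direct product fuzzy graph G × H is a complete product fuzzy graph: for any vertices (g₁,h₁), (g₂,h₂) with g₁ ≠ g₂ and h₁ ≠ h₂, Γ(g₁h₁, g₂h₂) = min{Λ(g₁h₁), Λ(g₂h₂)}. -/

import Mathlib

open Finset Classical

noncomputable section

/-- A fuzzy graph on a vertex type `V`: an undirected simple (crisp) adjacency
relation together with membership functions `sig : V → [0,1]` on vertices and
`mu` on edges satisfying `mu {x,y} ≤ min (sig x) (sig y)`. -/
structure FuzzyGraph (V : Type) where
  Adj : V → V → Prop
  symm : ∀ x y, Adj x y → Adj y x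
  loopless : ∀ x, ¬ Adj x x
  sig : V → ℝ
  mu : V → V → ℝ
  sig_nonneg : ∀ v, 0 ≤ sig v
  sig_le_one : ∀ v, sig v ≤ 1
  mu_symm : ∀ x y, mu x y = mu y x
  mu_le : ∀ x y, Adj x y → mu x y ≤ min (sig x) (sig y)

namespace FuzzyGraph

variable {α β : Type}

/-- `x` dominates `y`: they are adjacent and the edge membership attains
`min (sig x) (sig y)`. -/
def Dominates (G : FuzzyGraph α) (x y : α) : Prop :=
  G.Adj x y ∧ G.mu x y = min (G.sig x) (G.sig y)

/-- `S` is a dominating set: every vertex outside `S` is dominated by a member of `S`. -/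
def IsDominating (G : FuzzyGraph α) (S : Set α) : Prop :=
  ∀ v ∉ S, ∃ u ∈ S, G.Dominates u v

/-- `T` is a total dominating set: every vertex is dominated by a member of `T`. -/
def IsTotalDominating (G : FuzzyGraph α) (T : Set α) : Prop :=
  ∀ v, ∃ u ∈ T, G.Dominates u v

/-- The direct product of two fuzzy graphs: `Λ(g,h) = min (σ₁ g) (σ₂ h)` and
`Γ((g₁,h₁),(g₂,h₂)) = min (μ₁ g₁ g₂) (μ₂ h₁ h₂)`, with component-wise adjacency. -/
def prod (G : FuzzyGraph α) (H : FuzzyGraph β) : FuzzyGraph (α × β) where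
  Adj p q := G.Adj p.1 q.1 ∧ H.Adj p.2 q.2
  symm _ _ h := ⟨G.symm _ _ h.1, H.symm _ _ h.2⟩
  loopless _ h := G.loopless _ h.1
  sig p := min (G.sig p.1) (H.sig p.2)
  mu p q := min (G.mu p.1 q.1) (H.mu p.2 q.2)
  sig_nonneg p := le_min (G.sig_nonneg _) (H.sig_nonneg _)
  sig_le_one p := (min_le_left _ _).trans (G.sig_le_one _)
  mu_symm p q := by show min (G.mu p.1 q.1) (H.mu p.2 q.2) = min (G.mu q.1 p.1) (H.mu q.2 p.2); rw [G.mu_symm, H.mu_symm]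
  mu_le p q h := by
    have h1 := G.mu_le _ _ h.1
    have h2 := H.mu_le _ _ h.2
    simp only [le_min_iff] at h1 h2 ⊢
    exact ⟨⟨(min_le_left _ _).trans h1.1, (min_le_right _ _).trans h2.1⟩,
      (min_le_left _ _).trans h1.2, (min_le_right _ _).trans h2.2⟩

/-- Fuzzy cardinality of a finite vertex set. -/
def fc (G : FuzzyGraph α) (S : Finset α) : ℝ := ∑ v ∈ S, G.sig v

/-- The order `p` of a fuzzy graph: sum of all vertex memberships. -/
def order (G : FuzzyGraph α) [Fintype α] : ℝ := ∑ v, G.sig v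

/-- Domination number: minimum fuzzy cardinality of a dominating set. -/
noncomputable def domNumber (G : FuzzyGraph α) [Fintype α] : ℝ :=
  sInf {x | ∃ S : Finset α, G.IsDominating ↑S ∧ x = G.fc S}

/-- Total domination number: minimum fuzzy cardinality of a total dominating set. -/
noncomputable def totalDomNumber (G : FuzzyGraph α) [Fintype α] : ℝ :=
  sInf {x | ∃ T : Finset α, G.IsTotalDominating ↑T ∧ x = G.fc T}

/-- A complete fuzzy graph: every pair of distinct vertices is adjacent with
edge membership attaining the min of the vertex memberships. -/
def IsComplete (G : FuzzyGraph α) : Prop := ∀ x y : α, x ≠ y → G.Dominates x y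

/-- The product fuzzy graph `G × H` is complete: any two vertices differing in
both coordinates dominate each other. -/
def IsCompleteProd (G : FuzzyGraph α) (H : FuzzyGraph β) : Prop :=
  ∀ p q : α × β, p.1 ≠ q.1 → p.2 ≠ q.2 → (G.prod H).Dominates p q

/-- Connectedness of a fuzzy graph (via the crisp adjacency). -/
def Connected (G : FuzzyGraph α) : Prop := ∀ x y : α, Relation.ReflTransGen G.Adj x y

/-- Total `a`-domination number: minimum weight of a nonnegative `f` with
`f(N(v)) ≥ a` for every `v`, where `N(v)` is the (fuzzy) open neighborhood. -/
noncomputable def totalAlphaDomNumber (G : FuzzyGraph α) [Fintype α] (a : ℝ) : ℝ :=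
  sInf {w | ∃ f : α → ℝ, (∀ v, 0 ≤ f v) ∧
    (∀ v, a ≤ ∑ u ∈ univ.filter (fun u => G.Dominates u v), f u) ∧ w = ∑ v, f v}

/-- `a`-domination number (closed neighborhoods `N[v]`). -/
noncomputable def alphaDomNumber (G : FuzzyGraph α) [Fintype α] (a : ℝ) : ℝ :=
  sInf {w | ∃ f : α → ℝ, (∀ v, 0 ≤ f v) ∧
    (∀ v, a ≤ ∑ u ∈ univ.filter (fun u => u = v ∨ G.Dominates u v), f u) ∧ w = ∑ v, f v}

end FuzzyGraph

namespace FuzzyGraph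

theorem Dominates.prod {α β : Type} {G : FuzzyGraph α} {H : FuzzyGraph β} {g₁ g₂ : α}
    {h₁ h₂ : β} (hg : G.Dominates g₁ g₂) (hh : H.Dominates h₁ h₂) :
    (G.prod H).Dominates (g₁, h₁) (g₂, h₂) := by
  refine ⟨⟨hg.1, hh.1⟩, ?_⟩
  show min (G.mu g₁ g₂) (H.mu h₁ h₂)
    = min (min (G.sig g₁) (H.sig h₁)) (min (G.sig g₂) (H.sig h₂))
  rw [hg.2, hh.2, min_min_min_comm]

end FuzzyGraph

/-- If both `G` and `H` are complete fuzzy graphs, then the direct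
product fuzzy graph `G × H` is a complete product fuzzy graph. -/
theorem isCompleteProd_of_complete {α β : Type} (G : FuzzyGraph α) (H : FuzzyGraph β)
    (hG : G.IsComplete) (hH : H.IsComplete) : FuzzyGraph.IsCompleteProd G H :=
  fun _ _ h₁ h₂ ↦ (hG _ _ h₁).prod (hH _ _ h₂)
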